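/- There exists a constant D (depending only on γ) such that for every coset hγ and every p ∈ G, d_G(p, π_{hγ}(p)) ≤ D·d_G(p, hγ) + D. -/

import Mathlib

open MeasureTheory Filter
open scoped ENNReal

noncomputable section

namespace RandomDivergence

variable {G : Type*} [Group G]

/-- Word length of `g` with respect to the finite set `S` (inverses of generators allowed). -/
def wordLength (S : Finset G) (g : G) : ℕ :=
  sInf {n : ℕ | ∃ l : List G, l.length = n ∧ (∀ x ∈ l, x ∈ S ∨ x⁻¹ ∈ S) ∧ l.prod = g}

/-- The word metric on `G` with respect to the finite generating set `S`. -/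
def wdist (S : Finset G) (g h : G) : ℝ := (wordLength S (g⁻¹ * h) : ℝ)

/-- Distance from a point to a subset of `G` in the word metric. -/
def wdistSet (S : Finset G) (g : G) (A : Set G) : ℝ := sInf (wdist S g '' A)

/-- A discrete path in the Cayley graph of `(G,S)` from `a` to `b`: a nonempty sequence of
points starting at `a`, ending at `b`, with consecutive points at word distance at most 1. -/
structure IsPath (S : Finset G) (α : List G) (a b : G) : Prop where
  ne : α ≠ []
  head : α.head? = some a
  last : α.getLast? = some b
  chain : α.Chain' fun u v => wdist S u v ≤ 1

/-- Length (number of steps) of a discrete path. -/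
def pathLength (α : List G) : ℝ := (α.length : ℝ) - 1

/-- `div S a b c δ` is the infimum of lengths of discrete paths from `a` to `b` in the Cayley
graph of `(G,S)` avoiding the ball of radius `δ · d(c,{a,b})` around `c`; it is `∞` if no
such path exists. -/
def div (S : Finset G) (a b c : G) (δ : ℝ) : ℝ≥0∞ :=
  sInf {L : ℝ≥0∞ | ∃ α : List G, IsPath S α a b ∧
    (∀ p ∈ α, δ * min (wdist S c a) (wdist S c b) ≤ wdist S c p) ∧
    L = ENNReal.ofReal (pathLength α)}

/-- The Gromov product `(x , y)_z`. -/
def gromov {X : Type*} [MetricSpace X] (z x y : X) : ℝ := (dist x z + dist y z - dist x y) / 2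

/-- A Gromov hyperbolic metric space (four point condition). -/
def IsHypSpace (X : Type*) [MetricSpace X] : Prop :=
  ∃ δ : ℝ, 0 ≤ δ ∧ ∀ x y z w : X, min (gromov w x z) (gromov w z y) - δ ≤ gromov w x y

/-- `c` parametrises a geodesic segment from `x` to `y`. -/
def IsGeodesicSegment {X : Type*} [MetricSpace X] (c : ℝ → X) (x y : X) : Prop :=
  c 0 = x ∧ c (dist x y) = y ∧
    ∀ s ∈ Set.Icc (0:ℝ) (dist x y), ∀ t ∈ Set.Icc (0:ℝ) (dist x y),
      dist (c s) (c t) = |s - t|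

/-- A geodesic metric space. -/
def IsGeodesicSpace (X : Type*) [MetricSpace X] : Prop :=
  ∀ x y : X, ∃ c : ℝ → X, IsGeodesicSegment c x y

/-- The action of `G` on `X` is by isometries. -/
def IsIsometricAction (G : Type*) (X : Type*) [Group G] [MetricSpace X] [MulAction G X] :
    Prop :=
  ∀ (g : G) (x y : X), dist (g • x) (g • y) = dist x y

/-- `g` is loxodromic: `n ↦ gⁿ • x0` is a quasi-isometric embedding of `ℤ` into `X`. -/
def IsLoxodromic {X : Type*} [MetricSpace X] [MulAction G X] (g : G) (x0 : X) : Prop :=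
  ∃ a : ℝ, 0 < a ∧ ∃ b : ℝ, ∀ m n : ℤ,
    a⁻¹ * |(m : ℝ) - (n : ℝ)| - b ≤ dist (g ^ m • x0) (g ^ n • x0) ∧
      dist (g ^ m • x0) (g ^ n • x0) ≤ a * |(m : ℝ) - (n : ℝ)| + b

/-- A group is virtually cyclic if it has a cyclic subgroup of finite index. -/
def VirtuallyCyclic (G : Type*) [Group G] : Prop :=
  ∃ H : Subgroup G, H.FiniteIndex ∧ IsCyclic ↥H

/-- The action is non-elementary: unbounded orbits and `G` not virtually cyclic. -/
def NonElementaryAction (G : Type*) [Group G] {X : Type*} [MetricSpace X] [MulAction G X]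
    (x0 : X) : Prop :=
  (∀ R : ℝ, ∃ g : G, R < dist x0 (g • x0)) ∧ ¬ VirtuallyCyclic G

/-- The action of `G` on `X` is acylindrical. -/
def AcylindricalAction (G : Type*) (X : Type*) [Group G] [MetricSpace X] [MulAction G X] :
    Prop :=
  ∀ ε : ℝ, 0 < ε → ∃ (R : ℝ) (N : ℕ), 0 < R ∧
    ∀ x y : X, R ≤ dist x y →
      {g : G | dist x (g • x) ≤ ε ∧ dist y (g • y) ≤ ε}.encard ≤ (N : ℕ∞)

/-- `g` satisfies the weak proper discontinuity (WPD) condition. -/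
def IsWPD {X : Type*} [MetricSpace X] [MulAction G X] (g : G) : Prop :=
  ∀ κ : ℝ, 0 < κ → ∀ x : X, ∃ N : ℕ,
    {h : G | dist x (h • x) < κ ∧ dist (g ^ N • x) (h • g ^ N • x) < κ}.Finite

/-- An increasing diverging function `ℝ⁺ → ℝ⁺`. -/
structure DivergingFun (f : ℝ → ℝ) : Prop where
  mono : Monotone f
  tendsto_atTop : Tendsto f atTop atTop
  nonneg : ∀ x : ℝ, 0 ≤ x → 0 ≤ f x

/-- `π : G → ⟨g⟩` is an `X`-projection: `π h • x0` is a closest point of the orbit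
`⟨g⟩ • x0` to `h • x0`. -/
def IsXProj {X : Type*} [MetricSpace X] [MulAction G X] (x0 : X) (g : G) (π : G → G) : Prop :=
  ∀ h : G, π h ∈ Subgroup.zpowers g ∧
    ∀ z ∈ Subgroup.zpowers g, dist (π h • x0) (h • x0) ≤ dist (z • x0) (h • x0)

/-- The defining inequality of an `f`-divergent element `g`, with divergence constant `θ`
and `X`-projection `π`: any discrete path between points whose projections to `⟨g⟩` are at
word distance at least `θ`, staying outside the `d`-neighbourhood of `⟨g⟩`, has length at
least `f d`. -/
def FDivergentWith (S : Finset G) {X : Type*} [MetricSpace X] [MulAction G X] (x0 : X)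
    (f : ℝ → ℝ) (g : G) (θ : ℝ) (π : G → G) : Prop :=
  IsXProj x0 g π ∧
    ∀ x y : G, θ ≤ wdist S (π x) (π y) →
      ∀ d : ℝ, 0 < d → ∀ α : List G, IsPath S α x y →
        (∀ p ∈ α, ∀ z ∈ Subgroup.zpowers g, d ≤ wdist S p z) →
        f d ≤ pathLength α

/-- `g` is an `f`-divergent element (for the given action with basepoint `x0`). -/
def IsFDivergent (S : Finset G) {X : Type*} [MetricSpace X] [MulAction G X] (x0 : X)
    (f : ℝ → ℝ) (g : G) : Prop :=
  IsLoxodromic g x0 ∧ ∃ (θ : ℝ) (π : G → G), FDivergentWith S x0 f g θ π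

/-- `γ = E(g)` is the elementary closure of `g`: the unique maximal virtually cyclic
subgroup containing `g`. -/
def IsElementaryClosure (g : G) (γ : Subgroup G) : Prop :=
  g ∈ γ ∧ VirtuallyCyclic ↥γ ∧ ∀ γ' : Subgroup G, g ∈ γ' → VirtuallyCyclic ↥γ' → γ' ≤ γ

/-- The left coset of `γ` corresponding to `c : G ⧸ γ`, as a subset of `G`. -/
def cosetOf (γ : Subgroup G) (c : G ⧸ γ) : Set G :=
  {g : G | (QuotientGroup.mk g : G ⧸ γ) = c}

/-- Diameter in `X` of the image of a subset of `G` under the orbit map. -/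
def XDiam {X : Type*} [MetricSpace X] [MulAction G X] (x0 : X) (A : Set G) : ℝ :=
  sSup {r : ℝ | ∃ a ∈ A, ∃ b ∈ A, r = dist (a • x0) (b • x0)}

/-- A system of strong-Behrstock projections onto the cosets of `γ`: projections of
uniformly bounded diameter `B`, within Hausdorff distance `B` of closest-point projection
to the orbit of the coset, satisfying the strong Behrstock inequality. -/
structure ProjSystem (G : Type*) (X : Type*) [Group G] [MetricSpace X] [MulAction G X]
    (x0 : X) (γ : Subgroup G) where
  π : G ⧸ γ → G → Set G
  B : ℝ
  B_pos : 0 < B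
  mem_coset : ∀ (c : G ⧸ γ) (x : G), π c x ⊆ cosetOf γ c
  nonempty : ∀ (c : G ⧸ γ) (x : G), (π c x).Nonempty
  diam_le : ∀ (c : G ⧸ γ) (x : G), XDiam x0 (π c x) ≤ B
  closest : ∀ (c : G ⧸ γ) (p : G), ∃ q ∈ cosetOf γ c,
    (∀ r ∈ cosetOf γ c, dist (q • x0) (p • x0) ≤ dist (r • x0) (p • x0)) ∧
      ∀ a ∈ π c p, dist (a • x0) (q • x0) ≤ B
  behrstock : ∀ c c' : G ⧸ γ, c ≠ c' → ∀ x : G,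
    B < XDiam x0 (π c x ∪ ⋃ y ∈ cosetOf γ c', π c y) →
      π c' x = ⋃ y ∈ cosetOf γ c, π c' y

variable {X : Type*} [MetricSpace X] [MulAction G X] {x0 : X} {γ : Subgroup G}

/-- The projection distance `d_{hγ}(x,y) = diam (π_{hγ}(x) ∪ π_{hγ}(y))`. -/
def ProjSystem.dproj (P : ProjSystem G X x0 γ) (c : G ⧸ γ) (x y : G) : ℝ :=
  XDiam x0 (P.π c x ∪ P.π c y)

/-- `H_T(x,y)`: the set of cosets of `γ` on which `x` and `y` have projection
distance at least `T`. -/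
def ProjSystem.HT (P : ProjSystem G X x0 γ) (T : ℝ) (x y : G) : Set (G ⧸ γ) :=
  {c | T ≤ P.dproj c x y}

/-- `A^r_{x,y}`: cosets of `H_T(x,y)` whose projection of `x` lies in the ball `B(x,r)`. -/
def ProjSystem.ASet (P : ProjSystem G X x0 γ) (S : Finset G) (T r : ℝ) (x y : G) :
    Set (G ⧸ γ) :=
  P.HT T x y ∩ {c | ∀ a ∈ P.π c x, wdist S x a ≤ r}

/-- The projections are `L`-coarsely Lipschitz. -/
def ProjSystem.CoarseLip (P : ProjSystem G X x0 γ) (S : Finset G) (L : ℝ) : Prop :=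
  ∀ (c : G ⧸ γ) (x y : G), P.dproj c x y ≤ L * wdist S x y + L

section Probability

variable {Ω : Type*} [MeasureSpace Ω]

/-- `w` is the random walk on `G` driven by `μ`: the increments are i.i.d. of law `μ`. -/
def IsRandomWalk [MeasurableSpace G] (μ : Measure G) (w : ℕ → Ω → G) : Prop :=
  ∃ inc : ℕ → Ω → G, (∀ i, Measurable (inc i)) ∧
    ProbabilityTheory.iIndepFun (m := fun _ => inferInstance) inc (volume : Measure Ω) ∧
    (∀ i, Measure.map (inc i) (volume : Measure Ω) = μ) ∧
    ∀ (n : ℕ) (ω : Ω), w n ω = ((List.range n).map fun i => inc i ω).prod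

/-- `w` and `z` are two independent copies of the random walk driven by `μ`. -/
def AreIndepRandomWalks [MeasurableSpace G] (μ : Measure G) (w z : ℕ → Ω → G) : Prop :=
  ∃ inc : ℕ ⊕ ℕ → Ω → G, (∀ i, Measurable (inc i)) ∧
    ProbabilityTheory.iIndepFun (m := fun _ => inferInstance) inc (volume : Measure Ω) ∧
    (∀ i, Measure.map (inc i) (volume : Measure Ω) = μ) ∧
    (∀ (n : ℕ) (ω : Ω), w n ω = ((List.range n).map fun i => inc (Sum.inl i) ω).prod) ∧
    (∀ (n : ℕ) (ω : Ω), z n ω = ((List.range n).map fun i => inc (Sum.inr i) ω).prod)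

/-- `μ` has finite support generating `G` as a semigroup. -/
def FinSuppGen [MeasurableSpace G] (μ : Measure G) : Prop :=
  (Function.support fun g : G => μ {g}).Finite ∧
    Subsemigroup.closure {g : G | μ {g} ≠ 0} = ⊤

/-- `w : G → ℕ → Ω → G` is a (time-homogeneous) Markov chain on `G`: `w o` starts at `o`,
and conditionally on the past up to time `n` with current position `g`, the future has the
law of the chain started at `g`. -/
structure IsMarkovChain (w : G → ℕ → Ω → G) : Prop where
  start : ∀ (o : G) (ω : Ω), w o 0 ω = o
  markov : ∀ (o : G) (n : ℕ) (path : ℕ → G) (A : Set (ℕ → G)),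
    volume {ω : Ω | (∀ k ≤ n, w o k ω = path k) ∧ (fun j => w o (n + j) ω) ∈ A} =
      volume {ω : Ω | ∀ k ≤ n, w o k ω = path k} *
        volume {ω : Ω | (fun j => w (path n) j ω) ∈ A}

/-- Bounded jumps: there is a finite set `F` with `p(g,h) = 0` unless `h ∈ gF`. -/
def HasBddJumps (w : G → ℕ → Ω → G) : Prop :=
  ∃ F : Finset G, ∀ g h : G, g⁻¹ * h ∉ F → volume {ω : Ω | w g 1 ω = h} = 0

/-- Irreducibility of a Markov chain on `G`. -/
def IsIrreducibleChain (w : G → ℕ → Ω → G) : Prop :=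
  ∀ s : G, ∃ (ε : ℝ) (K : ℕ), 0 < ε ∧
    ∀ g : G, ∃ k ≤ K, ENNReal.ofReal ε ≤ volume {ω : Ω | w g k ω = g * s}

/-- `w` and `z` are independent and have the same law (independent copies). -/
def IndepSameLawChains (w z : G → ℕ → Ω → G) : Prop :=
  (∀ (p : G) (A : Set (ℕ → G)),
      volume {ω : Ω | (fun n => w p n ω) ∈ A} = volume {ω : Ω | (fun n => z p n ω) ∈ A}) ∧
    ∀ (p q : G) (A B : Set (ℕ → G)),
      volume {ω : Ω | (fun n => w p n ω) ∈ A ∧ (fun n => z q n ω) ∈ B} =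
        volume {ω : Ω | (fun n => w p n ω) ∈ A} * volume {ω : Ω | (fun n => z q n ω) ∈ B}

/-- The conclusion of [GS21, Proposition 5.1]: exponential tail for the total projection
distance undone by the chain on the cosets of `H_T(o,p)`. -/
def GSTailBound (P : ProjSystem G X x0 γ) (w : G → ℕ → Ω → G) (T C : ℝ) : Prop :=
  ∀ (o p : G) (n : ℕ) (t : ℝ), 0 < t →
    volume {ω : Ω | ∃ r ≤ n, t ≤ ∑' c : (P.HT T o p), P.dproj (c : G ⧸ γ) p (w p r ω)} ≤
      ENNReal.ofReal (C * Real.exp (-t / C))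

/-- Assumption MC: `w` is a Markov chain with bounded jumps, irreducible, satisfying the
conclusion of [GS21, Proposition 5.1] for all `T ≥ T₀'`. -/
structure AssumptionMC (P : ProjSystem G X x0 γ) (w : G → ℕ → Ω → G) (T₀' : ℝ) : Prop where
  chain : IsMarkovChain w
  bddJumps : HasBddJumps w
  irreducible : IsIrreducibleChain w
  tail : ∀ T : ℝ, T₀' ≤ T → ∃ C : ℝ, 0 < C ∧ GSTailBound P w T C

end Probability

/-!
Let `d = d_G(p, hγ)`, attained at `k ∈ hγ` since word lengths are natural numbers. A closest
point `q` of `hγ x₀` to `p x₀` satisfies `d_X(q x₀, p x₀) ≤ d_X(k x₀, p x₀) ≤ d`, and every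
`y ∈ π_{hγ}(p)` lies within `B` of `q x₀`, so `d_X(y x₀, k x₀) ≤ 2d + B`. Since the coset is
`(a, b)`-quasi-isometrically embedded, `d_G(k, y) ≤ a(2d + B + b)`, whence
`d_G(p, y) ≤ (1 + 2a) d + a(B + b)`.
-/

section WordMetric

variable (S : Finset G)

theorem exists_word_of_closure_eq_top (hS : Subgroup.closure (S : Set G) = ⊤) (g : G) :
    ∃ l : List G, (∀ x ∈ l, x ∈ S ∨ x⁻¹ ∈ S) ∧ l.prod = g := by
  have hg : g ∈ (Subgroup.closure (S : Set G)).toSubmonoid := by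
    rw [hS]; trivial
  rw [Subgroup.closure_toSubmonoid] at hg
  obtain ⟨l, hl, hprod⟩ := Submonoid.exists_list_of_mem_closure hg
  refine ⟨l, fun x hx => ?_, hprod⟩
  rcases hl x hx with h | h
  · exact Or.inl h
  · exact Or.inr (by simpa using h)

theorem exists_word_length_eq_wordLength (hS : Subgroup.closure (S : Set G) = ⊤) (g : G) :
    ∃ l : List G, l.length = wordLength S g ∧ (∀ x ∈ l, x ∈ S ∨ x⁻¹ ∈ S) ∧ l.prod = g := by
  obtain ⟨l, hl, hprod⟩ := exists_word_of_closure_eq_top S hS g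
  exact Nat.sInf_mem (s := {n | ∃ l : List G, l.length = n ∧ _}) ⟨l.length, l, rfl, hl, hprod⟩

theorem wordLength_le_length {g : G} {l : List G} (hl : ∀ x ∈ l, x ∈ S ∨ x⁻¹ ∈ S)
    (hprod : l.prod = g) : wordLength S g ≤ l.length :=
  Nat.sInf_le ⟨l, rfl, hl, hprod⟩

theorem wordLength_mul_le (hS : Subgroup.closure (S : Set G) = ⊤) (g h : G) :
    wordLength S (g * h) ≤ wordLength S g + wordLength S h := by
  obtain ⟨l₁, hlen₁, hl₁, hprod₁⟩ := exists_word_length_eq_wordLength S hS g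
  obtain ⟨l₂, hlen₂, hl₂, hprod₂⟩ := exists_word_length_eq_wordLength S hS h
  have hl : ∀ x ∈ l₁ ++ l₂, x ∈ S ∨ x⁻¹ ∈ S := fun x hx =>
    (List.mem_append.mp hx).elim (hl₁ x) (hl₂ x)
  simpa [hlen₁, hlen₂] using
    wordLength_le_length S hl (by rw [List.prod_append, hprod₁, hprod₂])

theorem wdist_nonneg (g h : G) : 0 ≤ wdist S g h := Nat.cast_nonneg _

theorem wdist_triangle (hS : Subgroup.closure (S : Set G) = ⊤) (x y z : G) :
    wdist S x z ≤ wdist S x y + wdist S y z := by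
  unfold wdist
  rw [show x⁻¹ * z = (x⁻¹ * y) * (y⁻¹ * z) by group]
  exact_mod_cast wordLength_mul_le S hS _ _

theorem wdistSet_le_wdist {A : Set G} {p a : G} (ha : a ∈ A) : wdistSet S p A ≤ wdist S p a :=
  csInf_le (⟨0, by rintro _ ⟨k, -, rfl⟩; exact wdist_nonneg S p k⟩ : BddBelow (wdist S p '' A))
    ⟨a, ha, rfl⟩

theorem exists_wdist_eq_wdistSet {A : Set G} (hA : A.Nonempty) (p : G) :
    ∃ k ∈ A, wdist S p k = wdistSet S p A := by
  set k := Function.argminOn (fun k => wordLength S (p⁻¹ * k)) A hA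
  have hk : k ∈ A := Function.argminOn_mem _ A hA
  refine ⟨k, hk, le_antisymm ?_ (wdistSet_le_wdist S hk)⟩
  refine le_csInf ⟨_, k, hk, rfl⟩ ?_
  rintro _ ⟨k', hk', rfl⟩
  unfold wdist
  exact_mod_cast Function.argminOn_le (fun k => wordLength S (p⁻¹ * k)) A hk'

end WordMetric

theorem cosetOf_nonempty (c : G ⧸ γ) : (cosetOf γ c).Nonempty :=
  QuotientGroup.mk_surjective c

theorem wdist_le_of_dist_smul_le {S : Finset G} {A : Set G} {a b : ℝ} (ha : 0 < a)
    (hqie : ∀ g ∈ A, ∀ h ∈ A, a⁻¹ * wdist S g h - b ≤ dist (g • x0) (h • x0))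
    {g h : G} (hg : g ∈ A) (hh : h ∈ A) {R : ℝ} (hR : dist (g • x0) (h • x0) ≤ R) :
    wdist S g h ≤ a * (R + b) := by
  have hqie_gh : wdist S g h ≤ a * (dist (g • x0) (h • x0) + b) := by
    rw [← inv_mul_le_iff₀ ha]
    linarith [hqie g hg h hh]
  exact hqie_gh.trans (by gcongr)

theorem ProjSystem.dist_smul_le_two_mul_add (P : ProjSystem G X x0 γ) {c : G ⧸ γ} {p k a : G}
    (hk : k ∈ cosetOf γ c) (ha : a ∈ P.π c p) :
    dist (k • x0) (a • x0) ≤ 2 * dist (k • x0) (p • x0) + P.B := by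
  obtain ⟨q, -, hq_min, hq_near⟩ := P.closest c p
  calc dist (k • x0) (a • x0)
      ≤ dist (k • x0) (p • x0) + dist (p • x0) (q • x0) + dist (q • x0) (a • x0) :=
        dist_triangle4 _ _ _ _
    _ ≤ dist (k • x0) (p • x0) + dist (k • x0) (p • x0) + P.B := by
        rw [dist_comm (p • x0) (q • x0), dist_comm (q • x0) (a • x0)]
        gcongr
        exacts [hq_min k hk, hq_near a ha]
    _ = 2 * dist (k • x0) (p • x0) + P.B := by ring

theorem proj_dist_bound_general
    {G : Type*} [Group G] (S : Finset G) (hS : Subgroup.closure (S : Set G) = ⊤)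
    {X : Type*} [MetricSpace X] [MulAction G X] (x0 : X)
    (hscale : ∀ g h : G, dist (g • x0) (h • x0) ≤ wdist S g h)
    (γ : Subgroup G)
    (P : ProjSystem G X x0 γ)
    (a b : ℝ) (ha : 0 < a)
    (hqie : ∀ c : G ⧸ γ, ∀ g ∈ cosetOf γ c, ∀ h ∈ cosetOf γ c,
      a⁻¹ * wdist S g h - b ≤ dist (g • x0) (h • x0)) :
    ∃ D : ℝ, 0 < D ∧ ∀ (c : G ⧸ γ) (p : G),
      wdistSet S p (P.π c p) ≤ D * wdistSet S p (cosetOf γ c) + D := by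
  refine ⟨max (1 + 2 * a) (a * (P.B + b)), lt_max_of_lt_left (by linarith), fun c p => ?_⟩
  obtain ⟨k, hk, hk_closest⟩ := exists_wdist_eq_wdistSet S (cosetOf_nonempty c) p
  obtain ⟨y, hy⟩ := P.nonempty c p
  have hX : dist (k • x0) (y • x0) ≤ 2 * wdist S p k + P.B := by
    refine (P.dist_smul_le_two_mul_add hk hy).trans ?_
    rw [dist_comm]
    gcongr
    exact hscale p k
  have hG : wdist S k y ≤ a * (2 * wdist S p k + P.B + b) :=
    wdist_le_of_dist_smul_le ha (hqie c) hk (P.mem_coset c p hy) hX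
  have hd := wdist_nonneg S p k
  rw [← hk_closest]
  calc wdistSet S p (P.π c p) ≤ wdist S p y := wdistSet_le_wdist S hy
    _ ≤ wdist S p k + wdist S k y := wdist_triangle S hS _ _ _
    _ ≤ (1 + 2 * a) * wdist S p k + a * (P.B + b) := by linarith
    _ ≤ max (1 + 2 * a) (a * (P.B + b)) * wdist S p k + max (1 + 2 * a) (a * (P.B + b)) := by
        gcongr
        exacts [le_max_left _ _, le_max_right _ _]

/-- the projections are closest-point projections in the word metric up to
multiplicative and additive error. -/
theorem proj_dist_bound
    {G : Type*} [Group G] (S : Finset G) (hS : Subgroup.closure (S : Set G) = ⊤)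
    {X : Type*} [MetricSpace X] [MulAction G X] (x0 : X)
    (hiso : IsIsometricAction G X) (hgeo : IsGeodesicSpace X) (hhyp : IsHypSpace X)
    (hscale : ∀ g h : G, dist (g • x0) (h • x0) ≤ wdist S g h)
    (g₀ : G) (hlox : IsLoxodromic g₀ x0) (hwpd : IsWPD (X := X) g₀)
    (γ : Subgroup G) (hγ : IsElementaryClosure g₀ γ)
    (P : ProjSystem G X x0 γ)
    (a b : ℝ) (ha : 0 < a) (hb : 0 ≤ b)
    (hqie : ∀ c : G ⧸ γ, ∀ g ∈ cosetOf γ c, ∀ h ∈ cosetOf γ c,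
      a⁻¹ * wdist S g h - b ≤ dist (g • x0) (h • x0))
    (Q : ℝ) (hQ : 0 ≤ Q)
    (hqc : ∀ c : G ⧸ γ, ∀ g ∈ cosetOf γ c, ∀ h ∈ cosetOf γ c,
      ∀ geod : ℝ → X, IsGeodesicSegment geod (g • x0) (h • x0) →
        ∀ t ∈ Set.Icc (0:ℝ) (dist (g • x0) (h • x0)),
          ∃ k ∈ cosetOf γ c, dist (geod t) (k • x0) ≤ Q) :
    ∃ D : ℝ, 0 < D ∧ ∀ (c : G ⧸ γ) (p : G),
      wdistSet S p (P.π c p) ≤ D * wdistSet S p (cosetOf γ c) + D :=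
  proj_dist_bound_general S hS x0 hscale γ P a b ha hqie

end RandomDivergence
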